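/- arXiv:2012.13284 — 3 statements merged into one kernel-verified Lean document; each statement's English description precedes it below -/
import Mathlib

section
/- Let Ω ⊆ ℂ be a nonempty bounded open set. Then Ω is a regular open set if and only if there exists a sequence of points (x_n) in ℂ \ closure(Ω) whose set of accumulation points is exactly the boundary ∂Ω. -/
/-!
Since `closure (closure Ω)ᶜ = (interior (closure Ω))ᶜ`, an open `Ω` is regular exactly when
`∂Ω ⊆ closure (closure Ω)ᶜ`. Cluster points of a sequence in `(closure Ω)ᶜ` lie in that closure.
Conversely, if the nonempty closed set `∂Ω` lies in it, take a dense sequence of `∂Ω`, repeat each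
term infinitely often, and move the `m`-th term into `(closure Ω)ᶜ` by less than `1 / (m + 1)`:
this does not change the cluster points, which are then exactly `∂Ω`.
-/

open Filter Topology Metric Set

theorem MapClusterPt.of_tendsto_dist_zero {ι X : Type*} [PseudoMetricSpace X] {l : Filter ι}
    {u v : ι → X} {p : X} (huv : Tendsto (fun n => dist (u n) (v n)) l (𝓝 0))
    (hu : MapClusterPt p l u) : MapClusterPt p l v := by
  rw [nhds_basis_ball.mapClusterPt_iff_frequently] at hu ⊢
  intro ε hε
  have hclose : ∀ᶠ n in l, dist (u n) (v n) < ε / 2 :=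
    (tendsto_order.1 huv).2 _ (half_pos hε)
  refine ((hu _ (half_pos hε)).and_eventually hclose).mono fun n ⟨hun, hn⟩ => ?_
  rw [mem_ball] at hun ⊢
  calc dist (v n) p ≤ dist (u n) (v n) + dist (u n) p := dist_triangle_left _ _ _
    _ < ε / 2 + ε / 2 := add_lt_add hn hun
    _ = ε := add_halves ε

theorem setOf_mapClusterPt_eq_of_tendsto_dist_zero {ι X : Type*} [PseudoMetricSpace X]
    {l : Filter ι} {u v : ι → X} (huv : Tendsto (fun n => dist (u n) (v n)) l (𝓝 0)) :
    {p | MapClusterPt p l u} = {p | MapClusterPt p l v} :=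
  Set.ext fun _ => ⟨.of_tendsto_dist_zero huv,
    .of_tendsto_dist_zero (by simpa only [dist_comm] using huv)⟩

theorem setOf_mapClusterPt_subset_closure_range {ι X : Type*} [TopologicalSpace X]
    {l : Filter ι} {u : ι → X} : {p | MapClusterPt p l u} ⊆ closure (range u) :=
  fun _ hp => isClosed_closure.mem_of_mapClusterPt hp
    (Eventually.of_forall fun n => subset_closure (mem_range_self n))

theorem setOf_mapClusterPt_unpair_eq_closure_range {X : Type*} [TopologicalSpace X]
    (p : ℕ → X) :
    {y | MapClusterPt y atTop fun m => p (Nat.unpair m).1} = closure (range p) := by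
  refine (setOf_mapClusterPt_subset_closure_range.trans
    (closure_mono (range_comp_subset_range _ p))).antisymm
    (closure_minimal ?_ isClosed_setOfPred_clusterPt)
  rintro _ ⟨k, rfl⟩
  have hpair : StrictMono (Nat.pair k) := fun _ _ => Nat.pair_lt_pair_right k
  refine MapClusterPt.of_comp hpair.tendsto_atTop ?_
  simpa only [Function.comp_def, Nat.unpair_pair] using tendsto_const_nhds.mapClusterPt

theorem exists_seq_mem_setOf_mapClusterPt_eq {X : Type*} [PseudoMetricSpace X]
    [TopologicalSpace.SeparableSpace X] {U F : Set X} (hF : IsClosed F) (hFne : F.Nonempty)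
    (hFU : F ⊆ closure U) :
    ∃ x : ℕ → X, (∀ n, x n ∈ U) ∧ {p | MapClusterPt p atTop x} = F := by
  have : Nonempty F := hFne.to_subtype
  obtain ⟨q, hq⟩ := TopologicalSpace.exists_dense_seq F
  have hqU : ∀ m, ∃ y ∈ U, dist y (q (Nat.unpair m).1) < 1 / ((m : ℝ) + 1) := fun m =>
    let ⟨y, hy, h⟩ := Metric.mem_closure_iff.1 (hFU (q (Nat.unpair m).1).2) _
      (Nat.one_div_pos_of_nat (n := m))
    ⟨y, hy, by rwa [dist_comm]⟩
  choose x hxU hxq using hqU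
  refine ⟨x, hxU, ?_⟩
  have hdist : Tendsto (fun m => dist (x m) (q (Nat.unpair m).1)) atTop (𝓝 0) :=
    squeeze_zero (fun _ => dist_nonneg) (fun m => (hxq m).le)
      tendsto_one_div_add_atTop_nhds_zero_nat
  rw [setOf_mapClusterPt_eq_of_tendsto_dist_zero hdist,
    setOf_mapClusterPt_unpair_eq_closure_range fun k => (q k : X), range_comp']
  exact (closure_minimal (image_subset_iff.2 fun k _ => k.2) hF).antisymm
    (Subtype.dense_iff.1 hq)

theorem IsOpen.eq_interior_closure_iff_frontier_subset {X : Type*} [TopologicalSpace X]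
    {s : Set X} (hs : IsOpen s) :
    s = interior (closure s) ↔ frontier s ⊆ closure (closure s)ᶜ := by
  rw [closure_compl, hs.frontier_eq]
  refine ⟨fun h => h ▸ fun _ hq => hq.2, fun h => ?_⟩
  refine hs.subset_interior_closure.antisymm fun q hq => ?_
  by_contra hqs
  exact h ⟨interior_subset hq, hqs⟩ hq

theorem regular_iff_exists_accumulating_sequence
    (Ω : Set ℂ) (hne : Ω.Nonempty) (hb : Bornology.IsBounded Ω) (ho : IsOpen Ω) :
    Ω = interior (closure Ω) ↔
      ∃ x : ℕ → ℂ, (∀ n, x n ∈ (closure Ω)ᶜ) ∧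
        {p : ℂ | MapClusterPt p Filter.atTop x} = frontier Ω := by
  rw [ho.eq_interior_closure_iff_frontier_subset]
  constructor
  · have hfr : (frontier Ω).Nonempty :=
      nonempty_frontier_iff.2 ⟨hne, fun h => NormedSpace.unbounded_univ ℝ ℂ (h ▸ hb)⟩
    exact exists_seq_mem_setOf_mapClusterPt_eq isClosed_frontier hfr
  · rintro ⟨x, hx, hcl⟩
    rw [← hcl]
    exact setOf_mapClusterPt_subset_closure_range.trans (closure_mono (range_subset_iff.2 hx))
end

section
/- Let K ⊆ ℂ be a compact set such that ℂ \ K is connected. Then there exists a sequence (U_n)_{n≥0} of compact subsets of ℂ such that for every n: (i) ℂ \ U_n is connected, (ii) K ⊆ interior(U_{n+1}) and U_{n+1} ⊆ interior(U_n), and (iii) the intersection of all U_n equals K. -/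
/-!
Take `U n` to be the closed `1/(n+1)`-neighbourhood of `K` with every bounded component of its
complement filled in, i.e. the complement of the component of a point `x` far from `K`.
Nesting holds because the closure of that component for one radius stays inside the complement
of the next, smaller neighbourhood, and is connected. For the intersection, a point `z ∉ K` is
joined to `x` by a path in the open connected set `Kᶜ`; the compact trace of this path keeps a
positive distance from `K`, so it lies in the unbounded component for all large `n`.
-/

open Set Metric Filter Topology

section Topological

variable {X : Type*} [TopologicalSpace X]

/-- `A` with every component of `Aᶜ` other than the one through `x` filled in: for `x` outside a
ball containing `A` in `ℂ`, these are exactly the bounded components. -/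
def filledAt (A : Set X) (x : X) : Set X := (connectedComponentIn Aᶜ x)ᶜ

lemma subset_filledAt (A : Set X) (x : X) : A ⊆ filledAt A x :=
  subset_compl_comm.1 (connectedComponentIn_subset _ _)

lemma isConnected_compl_filledAt {A : Set X} {x : X} (hx : x ∉ A) :
    IsConnected (filledAt A x)ᶜ := by
  rw [filledAt, compl_compl]
  exact isConnected_connectedComponentIn_iff.2 hx

lemma isClosed_filledAt [LocallyConnectedSpace X] {A : Set X} (hA : IsClosed A) (x : X) :
    IsClosed (filledAt A x) :=
  hA.isOpen_compl.connectedComponentIn.isClosed_compl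

lemma filledAt_subset_compl {A S : Set X} {x : X} (hS : IsPreconnected S) (hxS : x ∈ S)
    (hSA : S ⊆ Aᶜ) : filledAt A x ⊆ Sᶜ :=
  compl_subset_compl.2 (hS.subset_connectedComponentIn hxS hSA)

lemma filledAt_subset_interior_filledAt {A B : Set X} {x : X} (hBA : B ⊆ interior A)
    (hx : x ∉ A) : filledAt B x ⊆ interior (filledAt A x) := by
  unfold filledAt
  rw [interior_compl]
  refine compl_subset_compl.2 ?_
  have hclosure : closure (connectedComponentIn Aᶜ x) ⊆ Bᶜ :=
    calc closure (connectedComponentIn Aᶜ x) ⊆ closure Aᶜ :=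
          closure_mono (connectedComponentIn_subset _ _)
      _ = (interior A)ᶜ := closure_compl
      _ ⊆ Bᶜ := compl_subset_compl.2 hBA
  exact (isConnected_connectedComponentIn_iff.2 hx).closure.isPreconnected
    |>.subset_connectedComponentIn (subset_closure (mem_connectedComponentIn hx)) hclosure

end Topological

lemma cthickening_subset_interior_cthickening {α : Type*} [PseudoEMetricSpace α] {δ δ' : ℝ}
    (hδ' : 0 < δ') (hδδ' : δ < δ') (E : Set α) :
    cthickening δ E ⊆ interior (cthickening δ' E) :=
  (cthickening_subset_thickening' hδ' hδδ' E).trans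
    (isOpen_thickening.subset_interior_iff.2 (thickening_subset_cthickening _ _))

lemma iInter_filledAt_cthickening {X : Type*} [MetricSpace X] [LocallyPathConnectedSpace X]
    {K : Set X} (hK : IsCompact K) (hc : IsConnected Kᶜ) {x : X} (hx : x ∉ K) {ε : ℕ → ℝ}
    (hε : Tendsto ε atTop (𝓝 0)) :
    ⋂ n, filledAt (cthickening (ε n) K) x = K := by
  refine Subset.antisymm (fun z hz => ?_) (subset_iInter fun n => (self_subset_cthickening K).trans
    (subset_filledAt _ x))
  by_contra hzK
  obtain ⟨γ, hγ⟩ := ((hK.isClosed.isOpen_compl.isConnected_iff_isPathConnected).1 hc).joinedIn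
    z hzK x hx
  have hγK : K ⊆ (range γ)ᶜ := subset_compl_comm.1 (range_subset_iff.2 hγ)
  obtain ⟨δ, hδ, hKδ⟩ := hK.exists_cthickening_subset_open
    (isCompact_range γ.continuous).isClosed.isOpen_compl hγK
  obtain ⟨n, hn⟩ := (hε.eventually (ge_mem_nhds hδ)).exists
  have hγA : range γ ⊆ (cthickening (ε n) K)ᶜ :=
    subset_compl_comm.1 ((cthickening_mono hn K).trans hKδ)
  exact filledAt_subset_compl (isPreconnected_range γ.continuous) ⟨1, γ.target⟩ hγA
    (mem_iInter.1 hz n) ⟨0, γ.source⟩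

section Normed

variable {E : Type*} [NormedAddCommGroup E] [NormedSpace ℝ E]

theorem isPreconnected_compl_closedBall (h : 1 < Module.rank ℝ E) (y : E) (r : ℝ) :
    IsPreconnected (closedBall y r)ᶜ := by
  rcases lt_or_ge r 0 with hr | hr
  · rw [closedBall_eq_empty.2 hr, compl_empty]
    exact isPreconnected_univ
  have hpolar : (closedBall y r)ᶜ = (fun p : E × ℝ => y + p.2 • p.1) '' (sphere 0 1 ×ˢ Ioi r) := by
    ext z
    simp only [mem_compl_iff, mem_closedBall, not_le, mem_image, mem_prod, mem_sphere_zero_iff_norm,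
      mem_Ioi, Prod.exists]
    constructor
    · intro hz
      rw [dist_eq_norm] at hz
      have hz' : ‖z - y‖ ≠ 0 := (hr.trans_lt hz).ne'
      refine ⟨‖z - y‖⁻¹ • (z - y), ‖z - y‖, ⟨?_, hz⟩, ?_⟩
      · rw [norm_smul, norm_inv, norm_norm, inv_mul_cancel₀ hz']
      · rw [smul_smul, mul_inv_cancel₀ hz', one_smul, add_sub_cancel]
    · rintro ⟨u, t, ⟨hu, ht⟩, rfl⟩
      rw [dist_eq_norm, add_sub_cancel_left, norm_smul, hu, mul_one, Real.norm_eq_abs]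
      exact ht.trans_le (le_abs_self t)
  rw [hpolar]
  exact ((isPreconnected_sphere h 0 1).prod isPreconnected_Ioi).image _ (by fun_prop)

lemma isCompact_filledAt [ProperSpace E] (h : 1 < Module.rank ℝ E) {A : Set E} (hA : IsClosed A)
    {y x : E} {r : ℝ} (hAr : A ⊆ closedBall y r) (hx : r < dist x y) :
    IsCompact (filledAt A x) := by
  refine (isCompact_closedBall y r).of_isClosed_subset (isClosed_filledAt hA x) ?_
  simpa only [compl_compl] using filledAt_subset_compl (isPreconnected_compl_closedBall h y r)
    (not_le.2 hx) (compl_subset_compl.2 hAr)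

end Normed

theorem exists_compact_neighborhood_exhaustion
    (K : Set ℂ) (hK : IsCompact K) (hc : IsConnected Kᶜ) :
    ∃ U : ℕ → Set ℂ,
      (∀ n, IsCompact (U n)) ∧
      (∀ n, IsConnected (U n)ᶜ) ∧
      (∀ n, K ⊆ interior (U (n + 1))) ∧
      (∀ n, U (n + 1) ⊆ interior (U n)) ∧
      (⋂ n, U n) = K := by
  have hrank : 1 < Module.rank ℝ ℂ := by
    rw [Complex.rank_real_complex]; exact Cardinal.one_lt_two
  set ε : ℕ → ℝ := fun n => 1 / ((n : ℝ) + 1)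
  have hε_pos : ∀ n, 0 < ε n := fun n => by positivity
  have hε_anti : ∀ n, ε (n + 1) < ε n := fun n =>
    one_div_lt_one_div_of_lt (by positivity) (by push_cast; linarith)
  obtain ⟨r, hr⟩ := (hK.isBounded.cthickening (δ := 1)).subset_closedBall 0
  have hA_ball : ∀ n, cthickening (ε n) K ⊆ closedBall 0 r := fun n =>
    (cthickening_mono (div_le_one_of_le₀ (by simp) (by positivity)) K).trans hr
  obtain ⟨x, hx⟩ := NormedSpace.exists_lt_norm ℝ ℂ r
  have hx_dist : r < dist x 0 := by rwa [dist_zero_right]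
  have hxA : ∀ n, x ∉ cthickening (ε n) K := fun n hxn =>
    (mem_closedBall.1 (hA_ball n hxn)).not_gt hx_dist
  refine ⟨fun n => filledAt (cthickening (ε n) K) x,
    fun n => isCompact_filledAt hrank isClosed_cthickening (hA_ball n) hx_dist,
    fun n => isConnected_compl_filledAt (hxA n), fun n => ?_, fun n => ?_,
    iInter_filledAt_cthickening hK hc (fun hxK => hxA 0 (self_subset_cthickening K hxK))
      tendsto_one_div_add_atTop_nhds_zero_nat⟩
  · exact (self_subset_cthickening K).trans <| (cthickening_subset_interior_cthickening
      (hε_pos (n + 1)) (hε_pos (n + 1)) K).trans (interior_mono (subset_filledAt _ x))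
  · exact filledAt_subset_interior_filledAt
      (cthickening_subset_interior_cthickening (hε_pos n) (hε_anti n) K) (hxA n)
end

section
/- Let U ⊆ ℂ be open, let (f_k) be a sequence of holomorphic functions on U converging locally uniformly to a holomorphic function f that is injective on U, and let K ⊆ U be compact. Then there exists N such that for all k ≥ N the restriction of f_k to K is injective. -/
/-!
An injective holomorphic function has nonvanishing derivative: at a zero of order `n ≥ 2` of
`g - g a` one can write `g - g a = ψ ^ n` with `ψ` an open map at `a`, and then `w` and `ζ w`,
for `ζ` a primitive `n`-th root of unity, have distinct preimages with the same image under `g`.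
Since the derivatives of `f k` converge locally uniformly to `g'`, near each point of `K` they
eventually stay close to a nonzero constant, so each `f k` is eventually injective on a small
ball by the mean value inequality. Finitely many such balls cover `K`; pairs of points of `K`
lying in no common ball are separated by `g` by a fixed amount, which uniform convergence on `K`
transfers to `f k`.
-/

open Filter Topology Set Metric

theorem Convex.injOn_of_norm_deriv_sub_le {𝕜 E : Type*} [RCLike 𝕜] [NormedAddCommGroup E]
    [NormedSpace 𝕜 E] {F : 𝕜 → E} {s : Set 𝕜} {c : E} {C : ℝ} (hs : Convex ℝ s)
    (hF : ∀ x ∈ s, DifferentiableAt 𝕜 F x) (hFc : ∀ x ∈ s, ‖deriv F x - c‖ ≤ C)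
    (hC : C < ‖c‖) : InjOn F s := by
  intro x hx y hy hxy
  have hG : ∀ z ∈ s, HasDerivWithinAt (fun w => F w - w • c) (deriv F z - c) s z := fun z hz =>
    ((hF z hz).hasDerivAt.sub ((hasDerivAt_id z).smul_const c |>.congr_deriv (one_smul 𝕜 c)))
      |>.hasDerivWithinAt
  have hest := hs.norm_image_sub_le_of_norm_hasDerivWithin_le hG hFc hx hy
  rw [hxy, sub_sub_sub_cancel_left, ← sub_smul, norm_smul, norm_sub_rev, mul_comm] at hest
  have : ‖y - x‖ ≤ 0 := by nlinarith [norm_nonneg (y - x)]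
  exact (sub_eq_zero.1 (norm_le_zero_iff.1 this)).symm

theorem exists_mem_nhds_eventually_injOn_of_tendsto_deriv {𝕜 E ι : Type*} [RCLike 𝕜]
    [NormedAddCommGroup E] [NormedSpace 𝕜 E] {l : Filter ι} {F : ι → 𝕜 → E} {a : 𝕜} {c : E}
    (hc : c ≠ 0) (hF : ∀ᶠ p in l ×ˢ 𝓝 a, DifferentiableAt 𝕜 (F p.1) p.2)
    (hF' : Tendsto (fun p => deriv (F p.1) p.2) (l ×ˢ 𝓝 a) (𝓝 c)) :
    ∃ V ∈ 𝓝 a, ∀ᶠ n in l, InjOn (F n) V := by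
  have hclose : ∀ᶠ p in l ×ˢ 𝓝 a, DifferentiableAt 𝕜 (F p.1) p.2 ∧
      ‖deriv (F p.1) p.2 - c‖ ≤ ‖c‖ / 2 :=
    hF.and <| (hF'.eventually_mem (closedBall_mem_nhds c (half_pos (norm_pos_iff.2 hc)))).mono
      fun _ h => by rwa [mem_closedBall, dist_eq_norm] at h
  obtain ⟨P, hP, Q, hQ, hPQ⟩ := eventually_prod_iff.1 hclose
  obtain ⟨r, hr, hrQ⟩ := Metric.mem_nhds_iff.1 hQ
  refine ⟨ball a r, ball_mem_nhds a hr, hP.mono fun n hn => ?_⟩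
  exact (convex_ball a r).injOn_of_norm_deriv_sub_le (fun x hx => (hPQ hn (hrQ hx)).1)
    (fun x hx => (hPQ hn (hrQ hx)).2) (half_lt_self (norm_pos_iff.2 hc))

theorem exists_mem_nhds_eventually_injOn_of_tendstoLocallyUniformlyOn {E ι : Type*}
    [NormedAddCommGroup E] [NormedSpace ℂ E] [CompleteSpace E] {l : Filter ι} {F : ι → ℂ → E}
    {f : ℂ → E} {U : Set ℂ} {a : ℂ} (hf : TendstoLocallyUniformlyOn F f l U)
    (hF : ∀ᶠ n in l, DifferentiableOn ℂ (F n) U) (hfd : DifferentiableOn ℂ f U) (hU : IsOpen U)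
    (ha : a ∈ U) (hfa : deriv f a ≠ 0) : ∃ V ∈ 𝓝 a, ∀ᶠ n in l, InjOn (F n) V := by
  refine exists_mem_nhds_eventually_injOn_of_tendsto_deriv hfa
    ((hF.prod_mk (hU.mem_nhds ha)).mono fun p hp => hp.1.differentiableAt (hU.mem_nhds hp.2)) ?_
  have hd := (hU.tendstoLocallyUniformlyOn_iff_forall_tendsto.1 (hf.deriv hF hU)) a ha
  exact (((hfd.deriv hU).continuousOn.continuousAt (hU.mem_nhds ha)).tendsto.comp
    tendsto_snd).congr_uniformity hd

theorem AnalyticAt.exists_analyticAt_pow_eq {u : ℂ → ℂ} {a : ℂ} (hu : AnalyticAt ℂ u a)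
    (hua : u a ≠ 0) {n : ℕ} (hn : n ≠ 0) : ∃ v : ℂ → ℂ, AnalyticAt ℂ v a ∧ v ^ n = u := by
  obtain ⟨r, hr⟩ := IsAlgClosed.exists_pow_nat_eq (u a) (Nat.pos_of_ne_zero hn)
  refine ⟨fun z => r * (u z / u a) ^ (n⁻¹ : ℂ), analyticAt_const.mul ?_, funext fun z => ?_⟩
  · exact (hu.div analyticAt_const hua).cpow analyticAt_const (by simp [div_self hua])
  · simp only [Pi.pow_apply, mul_pow, Complex.cpow_nat_inv_pow _ hn, hr, mul_div_cancel₀ _ hua]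

theorem AnalyticAt.exists_eventuallyEq_pow_analyticOrderAt {h : ℂ → ℂ} {a : ℂ}
    (hh : AnalyticAt ℂ h a) {n : ℕ} (hn : analyticOrderAt h a = n) (hn0 : n ≠ 0) :
    ∃ ψ : ℂ → ℂ, AnalyticAt ℂ ψ a ∧ ψ a = 0 ∧ h =ᶠ[𝓝 a] ψ ^ n := by
  obtain ⟨u, hu, hua, hhu⟩ := hh.analyticOrderAt_eq_natCast.1 hn
  obtain ⟨v, hv, rfl⟩ := hu.exists_analyticAt_pow_eq hua hn0
  refine ⟨fun z => (z - a) * v z, (analyticAt_id.sub analyticAt_const).mul hv, by simp, ?_⟩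
  filter_upwards [hhu] with z hz
  simp [hz, mul_pow]

theorem not_injOn_of_eventuallyEq_pow {X : Type*} [TopologicalSpace X] {h ψ : X → ℂ} {a : X}
    {V : Set X} {n : ℕ} (hψ : 𝓝 0 ≤ map ψ (𝓝 a)) (hhψ : h =ᶠ[𝓝 a] ψ ^ n) (hn : 2 ≤ n)
    (hV : V ∈ 𝓝 a) : ¬ InjOn h V := by
  intro hinj
  obtain ⟨ε, hε, hball⟩ := Metric.mem_nhds_iff.1 (hψ (image_mem_map (inter_mem hV hhψ)))
  have hζ := Complex.isPrimitiveRoot_exp n (by omega)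
  set ζ := Complex.exp (2 * Real.pi * Complex.I / n)
  set w : ℂ := ((ε / 2 : ℝ) : ℂ)
  have hw : w ∈ ball (0 : ℂ) ε := by simp [w, abs_of_pos hε, hε]
  have hζw : ζ * w ∈ ball (0 : ℂ) ε := by
    simpa [hζ.norm'_eq_one (by omega)] using hw
  obtain ⟨z₁, ⟨hz₁V, hz₁ : h z₁ = ψ z₁ ^ n⟩, hψz₁⟩ := hball hw
  obtain ⟨z₂, ⟨hz₂V, hz₂ : h z₂ = ψ z₂ ^ n⟩, hψz₂⟩ := hball hζw
  -- `ψ ^ n` identifies `w` with `ζ * w`, so `h` identifies `z₁` with `z₂`.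
  have hz : z₂ = z₁ := hinj hz₂V hz₁V <| by
    rw [hz₁, hz₂, hψz₁, hψz₂, mul_pow, hζ.pow_eq_one, one_mul]
  have : ζ * w = 1 * w := by rw [one_mul, ← hψz₂, hz, hψz₁]
  exact hζ.ne_one (by omega) (mul_right_cancel₀ (by simp [w, hε.ne']) this)

theorem AnalyticAt.deriv_ne_zero_of_injOn {g : ℂ → ℂ} {a : ℂ} {V : Set ℂ}
    (hg : AnalyticAt ℂ g a) (hV : V ∈ 𝓝 a) (hinj : InjOn g V) : deriv g a ≠ 0 := by
  intro hder
  set h := fun z => g z - g a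
  have hinj' : InjOn h V := fun x hx y hy hxy => hinj hx hy (sub_left_injective hxy)
  have hh : AnalyticAt ℂ h a := hg.sub analyticAt_const
  have hne : ¬ ∀ᶠ z in 𝓝 a, h z = 0 := by
    intro hev
    obtain ⟨z, ⟨hz0, hzV⟩, hza⟩ :=
      (((hev.and hV).filter_mono nhdsWithin_le_nhds).and
        (self_mem_nhdsWithin : {a}ᶜ ∈ 𝓝[≠] a)).exists
    exact hza (hinj' hzV (mem_of_mem_nhds hV) (by simpa [h] using hz0))
  obtain ⟨n, hn⟩ := ENat.ne_top_iff_exists.1 (mt analyticOrderAt_eq_top.1 hne)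
  have hn2 : 2 ≤ n := by
    have hord : analyticOrderAt (deriv g) a + 1 = n := hn ▸ hg.analyticOrderAt_deriv_add_one
    have hpos : 1 ≤ analyticOrderAt (deriv g) a :=
      Order.one_le_iff_ne_zero.2 (analyticOrderAt_ne_zero.2 ⟨hg.deriv, hder⟩)
    exact_mod_cast hord ▸ add_le_add hpos (le_refl 1)
  have hn0 : n ≠ 0 := by omega
  obtain ⟨ψ, hψ, hψa, hhψ⟩ := hh.exists_eventuallyEq_pow_analyticOrderAt hn.symm hn0
  have hopen : 𝓝 0 ≤ map ψ (𝓝 a) := by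
    refine hψa ▸ hψ.eventually_constant_or_nhds_le_map_nhds.resolve_left fun hc => hne ?_
    filter_upwards [hc, hhψ] with z hz hz'
    simp [hz', hz, hψa, hn0]
  exact not_injOn_of_eventuallyEq_pow hopen hhψ hn2 hV hinj'

theorem TendstoUniformlyOn.eventually_injOn {X Y ι : Type*} [TopologicalSpace X] [MetricSpace Y]
    {l : Filter ι} {F : ι → X → Y} {f : X → Y} {K : Set X} (hf : TendstoUniformlyOn F f l K)
    (hK : IsCompact K) (hfc : ContinuousOn f K) (hinj : InjOn f K)
    (hloc : ∀ a ∈ K, ∃ V ∈ 𝓝 a, ∀ᶠ n in l, InjOn (F n) V) : ∀ᶠ n in l, InjOn (F n) K := by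
  choose V hV hVinj using hloc
  obtain ⟨t, hKt⟩ := hK.elim_nhds_subcover' (fun a ha => interior (V a ha))
    fun a ha => interior_mem_nhds.2 (hV a ha)
  set W : Set (X × X) := ⋃ a ∈ t, interior (V a a.2) ×ˢ interior (V a a.2)
  have hWo : IsOpen W := isOpen_biUnion fun a _ => isOpen_interior.prod isOpen_interior
  have hsep : ∀ p ∈ K ×ˢ K \ W, 0 < dist (f p.1) (f p.2) := by
    rintro ⟨x, y⟩ ⟨⟨hx : x ∈ K, hy : y ∈ K⟩, hxyW⟩
    refine dist_pos.2 fun hxy => hxyW ?_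
    obtain rfl : x = y := hinj hx hy hxy
    obtain ⟨a, ha, hxa⟩ := mem_iUnion₂.1 (hKt hx)
    exact mem_iUnion₂.2 ⟨a, ha, hxa, hxa⟩
  obtain ⟨m, hm, hmsep⟩ := ((hK.prod hK).diff hWo).exists_forall_le'
    (continuous_dist.comp_continuousOn (hfc.prodMap hfc) |>.mono sdiff_subset) hsep
  filter_upwards [(eventually_all_finset t).2 fun a _ => hVinj a a.2,
    Metric.tendstoUniformlyOn_iff.1 hf (m / 2) (half_pos hm)] with n hn hclose x hx y hy hxy
  by_contra hne
  have hxyW : (x, y) ∉ W := by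
    intro hW
    obtain ⟨a, ha, hxa, hya⟩ := mem_iUnion₂.1 hW
    exact hne (hn a ha (interior_subset hxa) (interior_subset hya) hxy)
  refine lt_irrefl m ?_
  calc m ≤ dist (f x) (f y) := hmsep (x, y) ⟨⟨hx, hy⟩, hxyW⟩
    _ ≤ dist (f x) (F n x) + dist (f y) (F n y) := hxy ▸ dist_triangle_right _ _ _
    _ < m / 2 + m / 2 := add_lt_add (hclose x hx) (hclose y hy)
    _ = m := add_halves m

theorem eventually_injOn_of_tendstoLocallyUniformly
    (U : Set ℂ) (hU : IsOpen U)
    (f : ℕ → ℂ → ℂ) (hf : ∀ k, DifferentiableOn ℂ (f k) U)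
    (g : ℂ → ℂ) (hg : DifferentiableOn ℂ g U) (hginj : Set.InjOn g U)
    (hconv : TendstoLocallyUniformlyOn f g Filter.atTop U)
    (K : Set ℂ) (hKc : IsCompact K) (hKU : K ⊆ U) :
    ∃ N : ℕ, ∀ k ≥ N, Set.InjOn (f k) K := by
  have hloc : ∀ a ∈ K, ∃ V ∈ 𝓝 a, ∀ᶠ k in atTop, InjOn (f k) V := fun a ha =>
    have hUa : U ∈ 𝓝 a := hU.mem_nhds (hKU ha)
    exists_mem_nhds_eventually_injOn_of_tendstoLocallyUniformlyOn hconv (.of_forall hf) hg hU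
      (hKU ha) ((hg.analyticAt hUa).deriv_ne_zero_of_injOn hUa hginj)
  have hunif : TendstoUniformlyOn f g atTop K :=
    (tendstoLocallyUniformlyOn_iff_forall_isCompact hU).1 hconv K hKU hKc
  exact eventually_atTop.1 <|
    hunif.eventually_injOn hKc (hg.continuousOn.mono hKU) (hginj.mono hKU) hloc
end
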